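/- For the edge-reinforced random walk on a cycle of length l, for each vertex i the process κ_n^i = Y_n^+(i) - Y_n^-(i) is a martingale with respect to the natural filtration, where Y_n^±(i) = ∑_{k=0}^{n-1} 1{I_k = i, I_{k+1} = i±1} / W(X_k^{e^±}), with e^+ = {i,i+1} and e^- = {i,i-1}. -/

import Mathlib

/-!
On the event `{I n = i}` the walk moves to `i + 1` with conditional probability
`p = W⁺ / (W⁺ + W⁻)`, where `W⁺`, `W⁻` are the current weights of `{i, i + 1}`, `{i - 1, i}`,
and otherwise to `i - 1`, a different vertex because `l ≥ 3`. The increment of `κ^i` is then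
`1 / W⁺` with probability `p` and `-1 / W⁻` with probability `1 - p`, whose conditional mean
`p / W⁺ - (1 - p) / W⁻` vanishes. The edge counts at time `n` are at most `x0 + n`, so the
increments are bounded, and `κ^i` is a sum of martingale differences.
-/

open MeasureTheory

theorem ZMod.add_one_ne_sub_one {l : ℕ} (hl : 3 ≤ l) (i : ZMod l) : i + 1 ≠ i - 1 := by
  intro h
  have h2 : ((2 : ℕ) : ZMod l) = 0 := by push_cast; linear_combination h
  have := Nat.le_of_dvd two_pos ((ZMod.natCast_eq_zero_iff 2 l).mp h2)
  omega

namespace MeasureTheory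

variable {Ω : Type*} {m0 : MeasurableSpace Ω} {μ : Measure Ω}

theorem martingale_sum_range_of_condExp_eq_zero {E : Type*} [NormedAddCommGroup E]
    [NormedSpace ℝ E] [CompleteSpace E] [IsFiniteMeasure μ] {ℱ : Filtration ℕ m0}
    {D : ℕ → Ω → E} (hmeas : ∀ n, StronglyMeasurable[ℱ (n + 1)] (D n))
    (hint : ∀ n, Integrable (D n) μ) (hce : ∀ n, μ[D n | ℱ n] =ᵐ[μ] 0) :
    Martingale (fun n ω => ∑ k ∈ Finset.range n, D k ω) ℱ μ := by
  refine martingale_of_condExp_sub_eq_zero_nat (fun n => ?_) (fun n => ?_) (fun n => ?_)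
  · exact Finset.stronglyMeasurable_fun_sum _ fun k hk =>
      (hmeas k).mono (ℱ.mono (Finset.mem_range.1 hk))
  · exact integrable_finsetSum _ fun k _ => hint k
  · have hdiff : (fun ω => ∑ k ∈ Finset.range (n + 1), D k ω) -
        (fun ω => ∑ k ∈ Finset.range n, D k ω) = D n := by
      funext ω
      simp [Finset.sum_range_succ]
    rw [hdiff]
    exact hce n

theorem condExp_mul_sub_of_stronglyMeasurable {m : MeasurableSpace Ω} (hm : m ≤ m0)
    [SigmaFinite (μ.trim hm)] {a b g : Ω → ℝ} (ha : StronglyMeasurable[m] a)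
    (hb : StronglyMeasurable[m] b) (hag : Integrable (a * g) μ) (hg : Integrable g μ)
    (hbi : Integrable b μ) :
    μ[a * g - b | m] =ᵐ[μ] a * μ[g | m] - b :=
  (condExp_sub hag hbi m).trans <|
    (condExp_mul_of_stronglyMeasurable_left ha hag hg).sub
      (condExp_of_stronglyMeasurable hm hb hbi).eventuallyEq

theorem integrable_comp_of_le [IsFiniteMeasure μ] {Y : Ω → ℕ} (hY : Measurable Y) {N : ℕ}
    (hYN : ∀ ω, Y ω ≤ N) (f : ℕ → ℝ) : Integrable (fun ω => f (Y ω)) μ := by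
  refine Integrable.of_bound (measurable_from_top.comp hY).aestronglyMeasurable
    (∑ k ∈ Finset.range (N + 1), ‖f k‖) (ae_of_all _ fun ω => ?_)
  exact Finset.single_le_sum (f := fun k => ‖f k‖) (fun _ _ => norm_nonneg _)
    (Finset.mem_range.2 (Nat.lt_succ_of_le (hYN ω)))

end MeasureTheory

section CycleWalk

variable {Ω : Type*} {m0 : MeasurableSpace Ω} {μ : Measure Ω} {ℱ : Filtration ℕ m0} {l : ℕ}
  {W : ℕ → ℝ} {I : ℕ → Ω → ZMod l} {X : ℕ → ZMod l → Ω → ℕ} {x0 : ZMod l → ℕ}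

variable (W I X) in
noncomputable def kappaIncrement (i : ZMod l) (n : ℕ) (ω : Ω) : ℝ :=
  (if I n ω = i ∧ I (n + 1) ω = i + 1 then 1 / W (X n i ω) else 0) -
    if I n ω = i ∧ I (n + 1) ω = i - 1 then 1 / W (X n (i - 1) ω) else 0

/-- `X n i` is the weight at time `n` of the edge `{i, i + 1}`. -/
structure IsEdgeCount (I : ℕ → Ω → ZMod l) (X : ℕ → ZMod l → Ω → ℕ) (x0 : ZMod l → ℕ) :
    Prop where
  zero : ∀ i ω, X 0 i ω = x0 i
  succ : ∀ n i ω, X (n + 1) i ω = X n i ω +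
    (if (I n ω = i ∧ I (n + 1) ω = i + 1) ∨ (I n ω = i + 1 ∧ I (n + 1) ω = i) then 1 else 0)

theorem measurableSet_walk_eq (hI : ∀ n, Measurable[ℱ n] (I n)) {k n : ℕ} (hkn : k ≤ n)
    (j : ZMod l) : MeasurableSet[ℱ n] {ω | I k ω = j} :=
  ℱ.mono hkn _ (hI k (measurableSet_singleton j))

namespace IsEdgeCount

theorem le (hX : IsEdgeCount I X x0) (n : ℕ) (j : ZMod l) (ω : Ω) : X n j ω ≤ x0 j + n := by
  induction n with
  | zero => rw [hX.zero]; omega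
  | succ n ih => rw [hX.succ]; split_ifs <;> omega

theorem measurable (hI : ∀ n, Measurable[ℱ n] (I n)) (hX : IsEdgeCount I X x0) (n : ℕ)
    (j : ZMod l) : Measurable[ℱ n] (X n j) := by
  induction n generalizing j with
  | zero =>
    rw [show X 0 j = fun _ => x0 j from funext (hX.zero j)]
    exact measurable_const
  | succ n ih =>
    rw [show X (n + 1) j = _ from funext (hX.succ n j)]
    have hstep : MeasurableSet[ℱ (n + 1)]
        {ω | (I n ω = j ∧ I (n + 1) ω = j + 1) ∨ (I n ω = j + 1 ∧ I (n + 1) ω = j)} :=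
      ((measurableSet_walk_eq hI n.le_succ j).inter (measurableSet_walk_eq hI le_rfl _)).union
        ((measurableSet_walk_eq hI n.le_succ _).inter (measurableSet_walk_eq hI le_rfl j))
    exact ((ih j).mono (ℱ.mono n.le_succ) le_rfl).add
      (Measurable.ite hstep measurable_const measurable_const)

theorem stronglyMeasurable_comp (hI : ∀ n, Measurable[ℱ n] (I n)) (hX : IsEdgeCount I X x0)
    (f : ℕ → ℝ) (n : ℕ) (j : ZMod l) : StronglyMeasurable[ℱ n] fun ω => f (X n j ω) :=
  (measurable_from_top.comp (hX.measurable hI n j)).stronglyMeasurable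

theorem integrable_comp [IsFiniteMeasure μ] (hI : ∀ n, Measurable[ℱ n] (I n))
    (hX : IsEdgeCount I X x0) (f : ℕ → ℝ) (n : ℕ) (j : ZMod l) :
    Integrable (fun ω => f (X n j ω)) μ :=
  integrable_comp_of_le ((hX.measurable hI n j).mono (ℱ.le n) le_rfl) (hX.le n j) f

end IsEdgeCount

theorem stronglyMeasurable_kappaIncrement (hI : ∀ n, Measurable[ℱ n] (I n))
    (hX : IsEdgeCount I X x0) (i : ZMod l) (n : ℕ) :
    StronglyMeasurable[ℱ (n + 1)] (kappaIncrement W I X i n) := by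
  have hw (j : ZMod l) : Measurable[ℱ (n + 1)] fun ω => 1 / W (X n j ω) :=
    ((hX.stronglyMeasurable_comp hI (fun k => 1 / W k) n j).mono (ℱ.mono n.le_succ)).measurable
  have hstep (j : ZMod l) : MeasurableSet[ℱ (n + 1)] {ω | I n ω = i ∧ I (n + 1) ω = j} :=
    (measurableSet_walk_eq hI n.le_succ i).inter (measurableSet_walk_eq hI le_rfl j)
  exact ((Measurable.ite (hstep _) (hw i) measurable_const).sub
    (Measurable.ite (hstep _) (hw (i - 1)) measurable_const)).stronglyMeasurable

theorem integrable_kappaIncrement [IsFiniteMeasure μ] (hI : ∀ n, Measurable[ℱ n] (I n))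
    (hX : IsEdgeCount I X x0) (i : ZMod l) (n : ℕ) :
    Integrable (kappaIncrement W I X i n) μ := by
  have hw (j : ZMod l) := hX.integrable_comp (μ := μ) hI (fun k => 1 / W k) n j
  refine ((hw i).norm.add (hw (i - 1)).norm).mono'
    ((stronglyMeasurable_kappaIncrement hI hX i n).mono (ℱ.le _)).aestronglyMeasurable
    (ae_of_all _ fun ω => (norm_sub_le _ _).trans (add_le_add ?_ ?_)) <;>
  split_ifs <;> simp

/-- The form `a * g - b` with `a`, `b` known at time `n` lets them be pulled out of the
conditional expectation; it uses that a step from `i` not to `i + 1` goes to `i - 1`. -/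
theorem kappaIncrement_eq_indicator (hl : 3 ≤ l) (i : ZMod l) (n : ℕ)
    (hstep : ∀ ω, I (n + 1) ω = I n ω + 1 ∨ I (n + 1) ω = I n ω - 1) :
    kappaIncrement W I X i n =
      {ω | I n ω = i}.indicator (fun ω => 1 / W (X n i ω) + 1 / W (X n (i - 1) ω)) *
        {ω | I (n + 1) ω = i + 1}.indicator (fun _ => 1) -
      {ω | I n ω = i}.indicator (fun ω => 1 / W (X n (i - 1) ω)) := by
  have hne := ZMod.add_one_ne_sub_one hl i
  funext ω
  by_cases hi : I n ω = i
  · rcases hstep ω with h | h <;> simp [kappaIncrement, hi, h, hne, hne.symm]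
  · simp [kappaIncrement, Set.indicator_apply, hi]

theorem condExp_kappaIncrement_eq_zero [IsFiniteMeasure μ] (hl : 3 ≤ l) (hW : ∀ k, 0 < W k)
    (hI : ∀ n, Measurable[ℱ n] (I n)) (hX : IsEdgeCount I X x0) (i : ZMod l) (n : ℕ)
    (hstep : ∀ ω, I (n + 1) ω = I n ω + 1 ∨ I (n + 1) ω = I n ω - 1)
    (htrans : ∀ᵐ ω ∂μ, I n ω = i →
      μ[{ω' | I (n + 1) ω' = i + 1}.indicator (fun _ => (1 : ℝ)) | ℱ n] ω
        = W (X n i ω) / (W (X n i ω) + W (X n (i - 1) ω))) :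
    μ[kappaIncrement W I X i n | ℱ n] =ᵐ[μ] 0 := by
  rw [kappaIncrement_eq_indicator hl i n hstep]
  set E := {ω | I n ω = i}
  set G := {ω | I (n + 1) ω = i + 1}
  have hE : MeasurableSet[ℱ n] E := measurableSet_walk_eq hI le_rfl i
  have hw (j : ZMod l) := hX.stronglyMeasurable_comp hI (fun k => 1 / W k) n j
  have hwi (j : ZMod l) := hX.integrable_comp (μ := μ) hI (fun k => 1 / W k) n j
  have hsum : StronglyMeasurable[ℱ n] fun ω => 1 / W (X n i ω) + 1 / W (X n (i - 1) ω) :=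
    (hw i).add (hw (i - 1))
  have hsumi : Integrable (fun ω => 1 / W (X n i ω) + 1 / W (X n (i - 1) ω)) μ :=
    (hwi i).add (hwi (i - 1))
  have hg : Integrable (G.indicator fun _ => (1 : ℝ)) μ :=
    (integrable_const 1).indicator (ℱ.le _ _ (measurableSet_walk_eq hI le_rfl _))
  have hg1 : ∀ᵐ ω ∂μ, ‖G.indicator (fun _ => (1 : ℝ)) ω‖ ≤ 1 :=
    ae_of_all _ fun ω => (norm_indicator_le_norm_self _ _).trans_eq norm_one
  have hpull := condExp_mul_sub_of_stronglyMeasurable (ℱ.le n) (hsum.indicator hE)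
    ((hw (i - 1)).indicator hE)
    ((hsumi.indicator (ℱ.le n _ hE)).mul_bdd hg.aestronglyMeasurable hg1) hg
    ((hwi (i - 1)).indicator (ℱ.le n _ hE))
  filter_upwards [hpull, htrans] with ω hω hp
  rw [hω]
  by_cases h : ω ∈ E
  · have hWi := hW (X n i ω)
    have hWj := hW (X n (i - 1) ω)
    simp only [Pi.sub_apply, Pi.mul_apply, Set.indicator_of_mem h, hp h, Pi.zero_apply]
    field_simp
    ring
  · simp [Set.indicator_of_notMem h]

end CycleWalk

theorem reinforced_walk_cycle_kappa_martingale_general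
    {Ω : Type*} {m0 : MeasurableSpace Ω} (μ : Measure Ω) [IsProbabilityMeasure μ]
    (ℱ : Filtration ℕ m0) (l : ℕ) (hl : 3 ≤ l)
    (W : ℕ → ℝ) (hW : ∀ k, 0 < W k)
    (I : ℕ → Ω → ZMod l) (X : ℕ → ZMod l → Ω → ℕ) (x0 : ZMod l → ℕ)
    (hIadapted : ∀ n, Measurable[ℱ n] (I n))
    (hX0 : ∀ i ω, X 0 i ω = x0 i)
    (hXrec : ∀ n i ω, X (n + 1) i ω = X n i ω +
      (if (I n ω = i ∧ I (n + 1) ω = i + 1) ∨ (I n ω = i + 1 ∧ I (n + 1) ω = i)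
        then 1 else 0))
    (hstep : ∀ n ω, I (n + 1) ω = I n ω + 1 ∨ I (n + 1) ω = I n ω - 1)
    (htrans : ∀ n (i : ZMod l), ∀ᵐ ω ∂μ, I n ω = i →
      (μ[Set.indicator {ω' | I (n + 1) ω' = i + 1} (fun _ => (1 : ℝ)) | ℱ n]) ω
        = W (X n i ω) / (W (X n i ω) + W (X n (i - 1) ω))) :
    ∀ i : ZMod l, Martingale (fun n ω =>
      (∑ k ∈ Finset.range n,
        if I k ω = i ∧ I (k + 1) ω = i + 1 then 1 / W (X k i ω) else 0)
      - ∑ k ∈ Finset.range n,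
        if I k ω = i ∧ I (k + 1) ω = i - 1 then 1 / W (X k (i - 1) ω) else 0)
      ℱ μ := by
  intro i
  have hX : IsEdgeCount I X x0 := ⟨hX0, hXrec⟩
  simp only [← Finset.sum_sub_distrib]
  exact martingale_sum_range_of_condExp_eq_zero
    (stronglyMeasurable_kappaIncrement hIadapted hX i)
    (integrable_kappaIncrement hIadapted hX i)
    (fun n => condExp_kappaIncrement_eq_zero hl hW hIadapted hX i n (hstep n) (htrans n i))

/-- for the edge-reinforced random walk `(I n)` on the cycle `ℤ/lℤ`
(with edge `e i = {i, i+1}`, edge counts `X n i`, and transition probabilities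
proportional to `W` of the current edge counts), for each vertex `i` the process
`κ n = Y⁺ n i - Y⁻ n i` is a martingale, where
`Y⁺ n i = ∑_{k<n} 1{I k = i, I (k+1) = i+1} / W (X k (e i))` and
`Y⁻ n i = ∑_{k<n} 1{I k = i, I (k+1) = i-1} / W (X k (e (i-1)))`. -/
theorem reinforced_walk_cycle_kappa_martingale
    {Ω : Type*} {m0 : MeasurableSpace Ω} (μ : Measure Ω) [IsProbabilityMeasure μ]
    (ℱ : Filtration ℕ m0) (l : ℕ) (hl : 3 ≤ l) [NeZero l]
    (W : ℕ → ℝ) (hW : ∀ k, 0 < W k)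
    (I : ℕ → Ω → ZMod l) (X : ℕ → ZMod l → Ω → ℕ) (x0 : ZMod l → ℕ)
    (hIadapted : ∀ n, Measurable[ℱ n] (I n))
    (hX0 : ∀ i ω, X 0 i ω = x0 i)
    (hXrec : ∀ n i ω, X (n + 1) i ω = X n i ω +
      (if (I n ω = i ∧ I (n + 1) ω = i + 1) ∨ (I n ω = i + 1 ∧ I (n + 1) ω = i)
        then 1 else 0))
    (hstep : ∀ n ω, I (n + 1) ω = I n ω + 1 ∨ I (n + 1) ω = I n ω - 1)
    (htrans : ∀ n (i : ZMod l), ∀ᵐ ω ∂μ, I n ω = i →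
      (μ[Set.indicator {ω' | I (n + 1) ω' = i + 1} (fun _ => (1 : ℝ)) | ℱ n]) ω
        = W (X n i ω) / (W (X n i ω) + W (X n (i - 1) ω))) :
    ∀ i : ZMod l, Martingale (fun n ω =>
      (∑ k ∈ Finset.range n,
        if I k ω = i ∧ I (k + 1) ω = i + 1 then 1 / W (X k i ω) else 0)
      - ∑ k ∈ Finset.range n,
        if I k ω = i ∧ I (k + 1) ω = i - 1 then 1 / W (X k (i - 1) ω) else 0)
      ℱ μ :=
  reinforced_walk_cycle_kappa_martingale_general μ ℱ l hl W hW I X x0 hIadapted hX0 hXrec hstep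
    htrans
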